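/- arXiv:math/9907191 — 4 statements merged into one kernel-verified Lean document; each statement's English description precedes it below -/
import Mathlib

section
/- Let f : ℝ² → ℝ³ be a C² map, let a, b : ℝ → ℝ² be C² curves with a(s₀) = b(s₀) and a'(s₀) = b'(s₀), and let N ∈ ℝ³ be a vector orthogonal to every vector in the image of Df(a(s₀)). Then ⟨(f∘a)''(s₀), N⟩ = ⟨(f∘b)''(s₀), N⟩; indeed both are equal to ⟨D²f(a(s₀))(a'(s₀), a'(s₀)), N⟩. -/
open RealInnerProductSpace

local notation "ℝ²" => EuclideanSpace ℝ (Fin 2)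
local notation "ℝ³" => EuclideanSpace ℝ (Fin 3)

lemma second_deriv_comp_aux
    (f : EuclideanSpace ℝ (Fin 2) → EuclideanSpace ℝ (Fin 3))
    (hf : ContDiff ℝ 2 f)
    (a : ℝ → EuclideanSpace ℝ (Fin 2)) (ha : ContDiff ℝ 2 a) (s : ℝ) :
    deriv (deriv (f ∘ a)) s =
      fderiv ℝ (fderiv ℝ f) (a s) (deriv a s) (deriv a s) +
        fderiv ℝ f (a s) (deriv (deriv a) s) := by
  have hfd : Differentiable ℝ f := hf.differentiable two_ne_zero
  have had : Differentiable ℝ a := ha.differentiable two_ne_zero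
  have h1 : deriv (f ∘ a) = fun t => fderiv ℝ f (a t) (deriv a t) := by
    funext t
    exact ((hfd (a t)).hasFDerivAt.comp_hasDerivAt t (had t).hasDerivAt).deriv
  rw [h1]
  have hf' : ContDiff ℝ 1 (fderiv ℝ f) := hf.fderiv_right (by norm_num)
  have ha' : ContDiff ℝ 1 (deriv a) := by
    have : ContDiff ℝ (1 + 1) a := by norm_num; exact ha
    exact (contDiff_succ_iff_deriv.mp this).2.2
  have hc : HasDerivAt (fun t => fderiv ℝ f (a t))
      (fderiv ℝ (fderiv ℝ f) (a s) (deriv a s)) s :=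
    (hf'.differentiable one_ne_zero (a s)).hasFDerivAt.comp_hasDerivAt s (had s).hasDerivAt
  have hu : HasDerivAt (deriv a) (deriv (deriv a) s) s :=
    (ha'.differentiable one_ne_zero s).hasDerivAt
  exact (hc.clm_apply hu).deriv

theorem normal_curvature_depends_only_on_tangent
    (f : ℝ² → ℝ³) (hf : ContDiff ℝ 2 f)
    (a b : ℝ → ℝ²) (ha : ContDiff ℝ 2 a) (hb : ContDiff ℝ 2 b)
    (s₀ : ℝ) (hab : a s₀ = b s₀) (hab' : deriv a s₀ = deriv b s₀)
    (N : ℝ³) (hNperp : ∀ v : ℝ², ⟪fderiv ℝ f (a s₀) v, N⟫ = 0) :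
    ⟪deriv (deriv (f ∘ a)) s₀, N⟫ = ⟪deriv (deriv (f ∘ b)) s₀, N⟫ ∧
    ⟪deriv (deriv (f ∘ a)) s₀, N⟫ =
      ⟪fderiv ℝ (fderiv ℝ f) (a s₀) (deriv a s₀) (deriv a s₀), N⟫ := by
  have Ha := second_deriv_comp_aux f hf a ha s₀
  have Hb := second_deriv_comp_aux f hf b hb s₀
  have key : ⟪deriv (deriv (f ∘ a)) s₀, N⟫ =
      ⟪fderiv ℝ (fderiv ℝ f) (a s₀) (deriv a s₀) (deriv a s₀), N⟫ := by
    rw [Ha, inner_add_left, hNperp, add_zero]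
  have keyb : ⟪deriv (deriv (f ∘ b)) s₀, N⟫ =
      ⟪fderiv ℝ (fderiv ℝ f) (a s₀) (deriv a s₀) (deriv a s₀), N⟫ := by
    rw [Hb, inner_add_left, ← hab, ← hab', hNperp, add_zero]
  exact ⟨key.trans keyb.symm, key⟩
end

section
/- Let α : ℝ → ℝ³ be a C¹ curve with ‖α'(s₀)‖ = 1, set y = α(s₀), let N ∈ ℝ³ be a unit vector with ⟨N, α'(s₀)⟩ = 0, and put n = N × α'(s₀) (cross product in ℝ³). Let u ∈ ℝ³ be a unit vector with u ≠ N and u ≠ −N, let v = u − ⟨u, N⟩N be the orthogonal projection of u onto the plane orthogonal to N, and let ũ = v/‖v‖. Then the derivative of s ↦ ⟨α(s), u⟩ vanishes at s₀ if and only if ũ = n or ũ = −n. -/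
open RealInnerProductSpace

local notation "ℝ³" => EuclideanSpace ℝ (Fin 3)

/-- The cross product on `EuclideanSpace ℝ (Fin 3)`. -/
def cross3 (a b : ℝ³) : ℝ³ := WithLp.toLp 2 (crossProduct a b)

lemma inner3 (x y : ℝ³) : ⟪x,y⟫ = x 0 * y 0 + x 1 * y 1 + x 2 * y 2 := by
  simp [PiLp.inner_apply, RCLike.inner_apply, Fin.sum_univ_three]; ring

lemma cross3_apply0 (a b : ℝ³) : cross3 a b 0 = a 1 * b 2 - a 2 * b 1 := by
  simp [cross3, crossProduct]
lemma cross3_apply1 (a b : ℝ³) : cross3 a b 1 = a 2 * b 0 - a 0 * b 2 := by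
  simp [cross3, crossProduct]
lemma cross3_apply2 (a b : ℝ³) : cross3 a b 2 = a 0 * b 1 - a 1 * b 0 := by
  simp [cross3, crossProduct]

lemma cross3_inner_left (a b : ℝ³) : ⟪cross3 a b, a⟫ = 0 := by
  simp only [inner3, cross3_apply0, cross3_apply1, cross3_apply2]; ring

lemma cross3_inner_right (a b : ℝ³) : ⟪cross3 a b, b⟫ = 0 := by
  simp only [inner3, cross3_apply0, cross3_apply1, cross3_apply2]; ring

lemma cross3_norm_sq (a b : ℝ³) :
    ⟪cross3 a b, cross3 a b⟫ = ⟪a,a⟫ * ⟪b,b⟫ - ⟪a,b⟫ ^ 2 := by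
  simp only [inner3, cross3_apply0, cross3_apply1, cross3_apply2]; ring

/-- Parseval for the orthonormal system `t, N×t, N`. -/
lemma parseval3 (t N w : ℝ³) (ht : ⟪t,t⟫ = 1) (hN : ⟪N,N⟫ = 1) (hNt : ⟪N,t⟫ = 0) :
    ⟪w,w⟫ = ⟪w,t⟫ ^ 2 + ⟪w, cross3 N t⟫ ^ 2 + ⟪w,N⟫ ^ 2 := by
  simp only [inner3, cross3_apply0, cross3_apply1, cross3_apply2] at *
  linear_combination
    ((w 0 * N 0 + w 1 * N 1 + w 2 * N 2) ^ 2
      - (w 0 * w 0 + w 1 * w 1 + w 2 * w 2) * (N 0 * N 0 + N 1 * N 1 + N 2 * N 2)) * ht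
    + ((w 0 * t 0 + w 1 * t 1 + w 2 * t 2) ^ 2
      - (w 0 * w 0 + w 1 * w 1 + w 2 * w 2)) * hN
    - (2 * (w 0 * N 0 + w 1 * N 1 + w 2 * N 2) * (w 0 * t 0 + w 1 * t 1 + w 2 * t 2)
      - (N 0 * t 0 + N 1 * t 1 + N 2 * t 2) * (w 0 * w 0 + w 1 * w 1 + w 2 * w 2)) * hNt

theorem boundary_critical_point_iff
    (α : ℝ → ℝ³) (hα : ContDiff ℝ 1 α) (s₀ : ℝ)
    (hunit : ‖deriv α s₀‖ = 1)
    (N : ℝ³) (hN : ‖N‖ = 1) (hNt : ⟪N, deriv α s₀⟫ = 0)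
    (n : ℝ³) (hn : n = cross3 N (deriv α s₀))
    (u : ℝ³) (hu : ‖u‖ = 1) (huN : u ≠ N) (huN' : u ≠ -N)
    (v : ℝ³) (hv : v = u - ⟪u, N⟫ • N)
    (utilde : ℝ³) (hutilde : utilde = ‖v‖⁻¹ • v) :
    deriv (fun s => ⟪α s, u⟫) s₀ = 0 ↔ utilde = n ∨ utilde = -n := by
  set t := deriv α s₀ with htdef
  -- scalar inner product facts
  have htt : ⟪t,t⟫ = 1 := by
    rw [real_inner_self_eq_norm_sq, hunit]; norm_num
  have hNN : ⟪N,N⟫ = 1 := by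
    rw [real_inner_self_eq_norm_sq, hN]; norm_num
  have huu : ⟪u,u⟫ = 1 := by
    rw [real_inner_self_eq_norm_sq, hu]; norm_num
  have hnn : ⟪n,n⟫ = 1 := by
    rw [hn, cross3_norm_sq, htt, hNN, hNt]; norm_num
  have hnt : ⟪n,t⟫ = 0 := by rw [hn]; exact cross3_inner_right N t
  have hnN : ⟪n,N⟫ = 0 := by rw [hn]; exact cross3_inner_left N t
  -- v facts
  have hvt : ⟪v,t⟫ = ⟪u,t⟫ := by
    rw [hv, inner_sub_left, inner_smul_left]
    simp [hNt]
  have hvN : ⟪v,N⟫ = 0 := by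
    rw [hv, inner_sub_left, inner_smul_left]
    simp [hNN, hN]
  have hv0 : v ≠ 0 := by
    intro h0
    have huNe : u = ⟪u,N⟫ • N := by
      have := hv.symm.trans h0
      rwa [sub_eq_zero] at this
    have h1 : ⟪u,N⟫ ^ 2 = 1 := by
      have := huu
      rw [huNe] at this
      rw [inner_smul_left, inner_smul_right] at this
      simp only [conj_trivial, hNN, mul_one] at this
      nlinarith [this]
    have h2 : (⟪u,N⟫ - 1) * (⟪u,N⟫ + 1) = 0 := by nlinarith [h1]
    rcases mul_eq_zero.mp h2 with h | h
    · exact huN (by rw [huNe, sub_eq_zero.mp h, one_smul])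
    · apply huN'
      rw [huNe]
      have : ⟪u,N⟫ = -1 := by linarith
      rw [this, neg_one_smul]
  have hvnorm : ‖v‖ ≠ 0 := norm_ne_zero_iff.mpr hv0
  -- derivative computation
  have hd : HasDerivAt (fun s => ⟪α s, u⟫) ⟪t, u⟫ s₀ := by
    have h1 : HasDerivAt α t s₀ := ((hα.differentiable one_ne_zero) s₀).hasDerivAt
    have h2 : HasDerivAt (fun _ : ℝ => u) 0 s₀ := hasDerivAt_const _ _
    have := h1.inner ℝ h2
    simpa using this
  rw [hd.deriv]
  constructor
  · intro h
    -- ⟪t,u⟫ = 0, so ⟪v,t⟫ = 0; Parseval gives ⟪v,v⟫ = ⟪v,n⟫²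
    have hvt0 : ⟪v,t⟫ = 0 := by rw [hvt, real_inner_comm]; exact h
    have hpar : ⟪v,v⟫ = ⟪v,n⟫ ^ 2 := by
      have := parseval3 t N v htt hNN hNt
      rw [← hn] at this
      rw [this, hvt0, hvN]; ring
    set c := ⟪v,n⟫ with hc
    have hvc : v = c • n := by
      have hz : ⟪v - c • n, v - c • n⟫ = 0 := by
        have h1 : ⟪n,v⟫ = c := (real_inner_comm v n).trans hc.symm
        have h2 : ⟪v,n⟫ = c := hc.symm
        simp only [inner_sub_left, inner_sub_right, inner_smul_left, inner_smul_right,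
          conj_trivial, hnn, h1, h2, hpar]
        try ring
      have := inner_self_eq_zero.mp hz
      rwa [sub_eq_zero] at this
    have hcnorm : ‖v‖ = |c| := by
      have : ‖v‖ ^ 2 = c ^ 2 := by rw [← real_inner_self_eq_norm_sq, hpar]
      calc ‖v‖ = √(‖v‖ ^ 2) := by rw [Real.sqrt_sq (norm_nonneg v)]
        _ = √(c ^ 2) := by rw [this]
        _ = |c| := Real.sqrt_sq_eq_abs c
    have hc0 : c ≠ 0 := by
      intro h0; apply hv0; rw [hvc, h0, zero_smul]
    rcases lt_or_gt_of_ne hc0 with hneg | hpos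
    · right
      rw [hutilde, hcnorm, abs_of_neg hneg, hvc, smul_smul]
      have hinv : (-c)⁻¹ * c = -1 := by
        field_simp
      rw [hinv, neg_one_smul]
    · left
      rw [hutilde, hcnorm, abs_of_pos hpos, hvc, smul_smul, inv_mul_cancel₀ hc0, one_smul]
  · intro h
    have hvt0 : ⟪v,t⟫ = 0 := by
      have hveq : v = ‖v‖ • utilde := by
        rw [hutilde, smul_smul, mul_inv_cancel₀ hvnorm, one_smul]
      rcases h with h | h
      · rw [hveq, h, inner_smul_left]; simp [hnt]
      · rw [hveq, h, inner_smul_left, inner_neg_left]; simp [hnt]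
    rw [real_inner_comm, ← hvt, hvt0]
end

section
/- Let α, β : ℝ → ℝ³ be C² curves with ‖α'(s)‖ = 1 and ‖β'(s)‖ = 1 for all s, with α(s₀) = β(s₀) = y and α'(s₀) = β'(s₀) = t. Let N be a unit vector with ⟨N, t⟩ = 0, suppose ⟨α''(s₀), N⟩ = ⟨β''(s₀), N⟩, and set n = N × t, k_g = ⟨α''(s₀), n⟩, k_g^u = ⟨β''(s₀), n⟩. Let u be a unit vector with ⟨u, t⟩ = 0 such that the function s ↦ ⟨β(s), u⟩ is constant. Then the second derivative of s ↦ ⟨α(s), u⟩ at s₀ equals (k_g − k_g^u)·⟨u, n⟩. -/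
open RealInnerProductSpace

local notation "ℝ³" => EuclideanSpace ℝ (Fin 3)

private lemma key_ident (w u N t : ℝ³) (h1 : ⟪t,t⟫ = 1) (h2 : ⟪N,N⟫ = 1) (h3 : ⟪N,t⟫ = 0)
    (h4 : ⟪w,t⟫ = 0) (h5 : ⟪w,N⟫ = 0) :
    ⟪w,u⟫ = ⟪w, cross3 N t⟫ * ⟪u, cross3 N t⟫ := by
  simp only [PiLp.inner_apply, RCLike.inner_apply, conj_trivial, Fin.sum_univ_three,
    cross3, PiLp.toLp_apply, WithLp.ofLp_toLp, cross_apply, Matrix.cons_val_zero, Matrix.cons_val_one, Matrix.head_cons,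
    Matrix.cons_val_two, Matrix.tail_cons] at *
  linear_combination (-(w 0 * u 0) - w 1 * u 1 - w 2 * u 2) * ((N 0^2+N 1^2+N 2^2) * h1 + h2)
    + (w 0 * u 0 + w 1 * u 1 + w 2 * u 2) * (N 0*t 0+N 1*t 1+N 2*t 2) * h3
    + ((u 0*N 0+u 1*N 1+u 2*N 2) * (t 0^2+t 1^2+t 2^2)
        - (N 0*t 0+N 1*t 1+N 2*t 2)*(u 0*t 0+u 1*t 1+u 2*t 2)) * h5
    + ((N 0^2+N 1^2+N 2^2)*(u 0*t 0+u 1*t 1+u 2*t 2)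
        - (u 0*N 0+u 1*N 1+u 2*N 2)*(N 0*t 0+N 1*t 1+N 2*t 2)) * h4

private lemma deriv_of_c2 {α : ℝ → ℝ³} (hα : ContDiff ℝ 2 α) : Differentiable ℝ (deriv α) := by
  have := (contDiff_succ_iff_deriv.mp (by norm_num at hα ⊢; exact hα : ContDiff ℝ (1+1) α)).2.2
  exact this.differentiable (by norm_num)

private lemma hasDerivAt_inner_const {f : ℝ → ℝ³} (u : ℝ³) (hf : Differentiable ℝ f) (s : ℝ) :
    HasDerivAt (fun s => ⟪f s, u⟫) ⟪deriv f s, u⟫ s := by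
  simpa using ((hf s).hasDerivAt.inner ℝ (hasDerivAt_const s u))

theorem second_deriv_height_eq_geodesic_curvature_difference
    (α β : ℝ → ℝ³) (hα : ContDiff ℝ 2 α) (hβ : ContDiff ℝ 2 β)
    (hαunit : ∀ s, ‖deriv α s‖ = 1) (hβunit : ∀ s, ‖deriv β s‖ = 1)
    (s₀ : ℝ) (y : ℝ³) (hαy : α s₀ = y) (hβy : β s₀ = y)
    (t : ℝ³) (hαt : deriv α s₀ = t) (hβt : deriv β s₀ = t)
    (N : ℝ³) (hN : ‖N‖ = 1) (hNt : ⟪N, t⟫ = 0)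
    (hnormal : ⟪deriv (deriv α) s₀, N⟫ = ⟪deriv (deriv β) s₀, N⟫)
    (n : ℝ³) (hn : n = cross3 N t)
    (kg kgu : ℝ) (hkg : kg = ⟪deriv (deriv α) s₀, n⟫)
    (hkgu : kgu = ⟪deriv (deriv β) s₀, n⟫)
    (u : ℝ³) (hu : ‖u‖ = 1) (hut : ⟪u, t⟫ = 0)
    (hlevel : ∀ s s', ⟪β s, u⟫ = ⟪β s', u⟫) :
    deriv (deriv (fun s => ⟪α s, u⟫)) s₀ = (kg - kgu) * ⟪u, n⟫ := by
  have hαd : Differentiable ℝ α := hα.differentiable (by norm_num)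
  have hβd : Differentiable ℝ β := hβ.differentiable (by norm_num)
  have hαd2 : Differentiable ℝ (deriv α) := deriv_of_c2 hα
  have hβd2 : Differentiable ℝ (deriv β) := deriv_of_c2 hβ
  set A := deriv (deriv α) s₀ with hA
  set B := deriv (deriv β) s₀ with hB
  -- second derivative of the α-height function
  have hder1 : deriv (fun s => ⟪α s, u⟫) = fun s => ⟪deriv α s, u⟫ :=
    funext fun s => (hasDerivAt_inner_const u hαd s).deriv
  have hmain : deriv (deriv (fun s => ⟪α s, u⟫)) s₀ = ⟪A, u⟫ := by
    rw [hder1]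
    exact (hasDerivAt_inner_const u hαd2 s₀).deriv
  -- the β-height function is constant, so ⟪B, u⟫ = 0
  have hβconst : (fun s => ⟪β s, u⟫) = fun _ => ⟪β s₀, u⟫ := funext fun s => hlevel s s₀
  have hβ1 : ∀ s, ⟪deriv β s, u⟫ = 0 := by
    intro s
    have h := hasDerivAt_inner_const u hβd s
    rw [hβconst] at h
    exact h.unique (hasDerivAt_const _ _)
  have hBu : ⟪B, u⟫ = 0 := by
    have h := hasDerivAt_inner_const u hβd2 s₀
    have h0 : (fun s => ⟪deriv β s, u⟫) = fun _ => (0 : ℝ) := funext hβ1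
    rw [h0] at h
    exact h.unique (hasDerivAt_const _ _)
  -- unit speed gives ⟪A, t⟫ = 0 and ⟪B, t⟫ = 0
  have htangent : ∀ (f : ℝ → ℝ³), Differentiable ℝ (deriv f) →
      (∀ s, ‖deriv f s‖ = 1) → deriv f s₀ = t → ⟪deriv (deriv f) s₀, t⟫ = 0 := by
    intro f hf2 hfu hft
    have h : ∀ s, HasDerivAt (fun s => ⟪deriv f s, deriv f s⟫)
        (⟪deriv f s, deriv (deriv f) s⟫ + ⟪deriv (deriv f) s, deriv f s⟫) s :=
      fun s => (hf2 s).hasDerivAt.inner ℝ (hf2 s).hasDerivAt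
    have hc : (fun s => ⟪deriv f s, deriv f s⟫) = fun _ => (1 : ℝ) := by
      funext s
      rw [real_inner_self_eq_norm_sq, hfu s]; norm_num
    have h0 := h s₀
    rw [hc] at h0
    have := h0.unique (hasDerivAt_const _ _)
    rw [hft] at this
    rw [real_inner_comm]
    linarith [this, real_inner_comm t (deriv (deriv f) s₀)]
  have hAt : ⟪A, t⟫ = 0 := htangent α hαd2 hαunit hαt
  have hBt : ⟪B, t⟫ = 0 := htangent β hβd2 hβunit hβt
  -- apply the algebraic identity to w = A - B
  have htt : ⟪t, t⟫ = 1 := by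
    rw [real_inner_self_eq_norm_sq, ← hαt, hαunit s₀]; norm_num
  have hNN : ⟪N, N⟫ = 1 := by rw [real_inner_self_eq_norm_sq, hN]; norm_num
  have hwt : ⟪A - B, t⟫ = 0 := by rw [inner_sub_left, hAt, hBt]; ring
  have hwN : ⟪A - B, N⟫ = 0 := by rw [inner_sub_left, hnormal]; ring
  have hkey := key_ident (A - B) u N t htt hNN hNt hwt hwN
  rw [inner_sub_left, inner_sub_left, ← hn, hBu, ← hkg, ← hkgu] at hkey
  rw [hmain]
  linarith [hkey]
end

section
/- Let t, N, u ∈ ℝ³ be unit vectors with ⟨N, t⟩ = 0, ⟨u, t⟩ = 0, u ≠ N and u ≠ −N, and set n = N × t. Then ⟨u, n⟩ ≠ 0. Consequently, under the hypotheses of the identity ⟨u, α''(s₀)⟩ = (k_g − k_g^u)⟨u, n⟩, the critical point s₀ of s ↦ ⟨α(s), u⟩ is non-degenerate (its second derivative at s₀ is nonzero) if and only if k_g ≠ k_g^u. -/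
open RealInnerProductSpace

local notation "ℝ³" => EuclideanSpace ℝ (Fin 3)

theorem nondegenerate_iff_geodesic_curvatures_differ
    (t N u : ℝ³) (ht : ‖t‖ = 1) (hN : ‖N‖ = 1) (hu : ‖u‖ = 1)
    (hNt : ⟪N, t⟫ = 0) (hut : ⟪u, t⟫ = 0)
    (huN : u ≠ N) (huN' : u ≠ -N)
    (n : ℝ³) (hn : n = cross3 N t) :
    ⟪u, n⟫ ≠ 0 ∧
    ∀ (kg kgu D2 : ℝ), D2 = (kg - kgu) * ⟪u, n⟫ → (D2 ≠ 0 ↔ kg ≠ kgu) := by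
  have htt : ⟪t, t⟫ = 1 := by rw [real_inner_self_eq_norm_sq, ht]; norm_num
  have hNN : ⟪N, N⟫ = 1 := by rw [real_inner_self_eq_norm_sq, hN]; norm_num
  have huu : ⟪u, u⟫ = 1 := by rw [real_inner_self_eq_norm_sq, hu]; norm_num
  have key : ⟪u, n⟫ ≠ 0 := by
    intro h0
    -- Gram determinant identity
    have gram : ⟪u, n⟫ ^ 2 =
        ⟪u, u⟫ * ⟪N, N⟫ * ⟪t, t⟫ + 2 * ⟪u, t⟫ * ⟪N, t⟫ * ⟪u, N⟫
          - ⟪u, t⟫ ^ 2 * ⟪N, N⟫ - ⟪u, N⟫ ^ 2 * ⟪t, t⟫ - ⟪N, t⟫ ^ 2 * ⟪u, u⟫ := by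
      simp only [hn, cross3, crossProduct, PiLp.inner_apply, PiLp.toLp_apply, RCLike.inner_apply, conj_trivial,
        Fin.sum_univ_three, LinearMap.mk₂_apply, Matrix.cons_val_zero, Matrix.cons_val_one,
        Matrix.head_cons, Matrix.cons_val_two, Matrix.tail_cons]
      ring
    rw [h0, htt, hNN, huu, hut, hNt] at gram
    have hc2 : ⟪u, N⟫ ^ 2 = 1 := by nlinarith [gram]
    have hdiff : u = ⟪u, N⟫ • N := by
      have : ‖u - ⟪u, N⟫ • N‖ ^ 2 = 0 := by
        rw [← real_inner_self_eq_norm_sq]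
        simp only [inner_sub_sub_self, inner_smul_left, inner_smul_right, real_inner_smul_left,
          real_inner_smul_right, huu, hNN, real_inner_comm N u, starRingEnd_apply,
          star_trivial]
        have hc : (inner ℝ N u : ℝ) = inner ℝ u N := real_inner_comm u N
        rw [hc]
        nlinarith [hc2]
      have := pow_eq_zero_iff (n := 2) (by norm_num) |>.mp this
      rw [norm_eq_zero, sub_eq_zero] at this
      exact this
    have : (⟪u, N⟫ - 1) * (⟪u, N⟫ + 1) = 0 := by nlinarith [hc2]
    rcases mul_eq_zero.mp this with h1 | h1
    · exact huN (by rw [hdiff, sub_eq_zero.mp h1, one_smul])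
    · have h1' : ⟪u, N⟫ = -1 := by linarith
      exact huN' (by rw [hdiff, h1', neg_smul, one_smul])
  refine ⟨key, fun kg kgu D2 hD2 => ?_⟩
  constructor
  · intro hD hk; apply hD; rw [hD2, hk]; ring
  · intro hk hD
    rw [hD2] at hD
    rcases mul_eq_zero.mp hD with h | h
    · exact hk (by linarith [sub_eq_zero.mp h])
    · exact key h
end
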